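/- Let E be a Banach space and let (T₁(t))_{t≥0} and (T₂(t))_{t≥0} be strongly continuous semigroups on E. Assume there exist M' ≥ 1 and ω' ≥ 0 such that ‖T₁(t)‖ ≤ M'·e^{ω't}, ‖T₂(t)‖ ≤ M'·e^{ω't}, and ‖(T₂(t/n)T₁(t/n))^n‖ ≤ M'·e^{ω't} for all t ≥ 0 and all integers n ≥ 1. Set F := C₀([0,∞); E), let Q_i(t)f := ∫₀ᵗ T_i(t−s) f(s) ds for f ∈ F, and define on ℰ := E × F × F the bounded operators 𝒯₁(t)(x,f,g) := (T₁(t)x + Q₁(t)f, L(t)f, g) and 𝒯₂(t)(x,f,g) := (T₂(t)x + Q₂(t)g, f, L(t)g). Then there exist M ≥ 1 and ω ∈ ℝ such that ‖(𝒯₂(t/n)𝒯₁(t/n))^n‖ ≤ M·e^{ωt} for all t ≥ 0 and all integers n ≥ 1. -/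

import Mathlib

open ContinuousLinearMap MeasureTheory
open scoped ZeroAtInfty

/-- Extension by zero of a `C₀` function on `[0,∞)` to all of `ℝ`. -/
noncomputable def extIci {E : Type*} [NormedAddCommGroup E]
    (f : C₀(Set.Ici (0 : ℝ), E)) (s : ℝ) : E :=
  if h : 0 ≤ s then f ⟨s, h⟩ else 0

/-- The operator `(x,f,g) ↦ (T x + Q f, L f, g)` on `E × F × F`. -/
noncomputable def tripleMatFirst {E F : Type*} [NormedAddCommGroup E] [NormedSpace ℝ E]
    [NormedAddCommGroup F] [NormedSpace ℝ F]
    (T : E →L[ℝ] E) (Q : F →L[ℝ] E) (L : F →L[ℝ] F) : (E × F × F) →L[ℝ] (E × F × F) :=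
  (T.comp (fst ℝ E (F × F)) + Q.comp ((fst ℝ F F).comp (snd ℝ E (F × F)))).prod
    (((L.comp ((fst ℝ F F).comp (snd ℝ E (F × F)))).prod
      ((snd ℝ F F).comp (snd ℝ E (F × F)))))

/-- The operator `(x,f,g) ↦ (T x + Q g, f, L g)` on `E × F × F`. -/
noncomputable def tripleMatSecond {E F : Type*} [NormedAddCommGroup E] [NormedSpace ℝ E]
    [NormedAddCommGroup F] [NormedSpace ℝ F]
    (T : E →L[ℝ] E) (Q : F →L[ℝ] E) (L : F →L[ℝ] F) : (E × F × F) →L[ℝ] (E × F × F) :=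
  (T.comp (fst ℝ E (F × F)) + Q.comp ((snd ℝ F F).comp (snd ℝ E (F × F)))).prod
    ((((fst ℝ F F).comp (snd ℝ E (F × F)))).prod
      (L.comp ((snd ℝ F F).comp (snd ℝ E (F × F)))))

lemma trotter_triple_aux {E F : Type*} [NormedAddCommGroup E] [NormedSpace ℝ E]
    [NormedAddCommGroup F] [NormedSpace ℝ F]
    (T₁ T₂ : E →L[ℝ] E) (Q₁ Q₂ : F →L[ℝ] E) (Lo : F →L[ℝ] F)
    (K τ : ℝ) (n : ℕ) (hK1 : 1 ≤ K) (hτ : 0 ≤ τ) (hLo : ‖Lo‖ ≤ 1)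
    (hT2 : ‖T₂‖ ≤ K) (hQ1 : ‖Q₁‖ ≤ τ * K) (hQ2 : ‖Q₂‖ ≤ τ * K)
    (hS : ∀ m : ℕ, m ≤ n → ‖(T₂ * T₁) ^ m‖ ≤ K) :
    ‖(tripleMatSecond T₂ Q₂ Lo * tripleMatFirst T₁ Q₁ Lo) ^ n‖
      ≤ K + 2 * ((n : ℝ) * (τ * K ^ 3)) := by
  have hK0 : (0:ℝ) < K := lt_of_lt_of_le one_pos hK1
  set A := tripleMatSecond T₂ Q₂ Lo * tripleMatFirst T₁ Q₁ Lo with hAdef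
  set S := T₂ * T₁ with hSdef
  have hA : ∀ v : E × F × F,
      A v = (T₂ (T₁ v.1 + Q₁ v.2.1) + Q₂ v.2.2, Lo v.2.1, Lo v.2.2) := fun _ => rfl
  have hLapp : ∀ h : F, ‖Lo h‖ ≤ ‖h‖ := by
    intro h
    calc ‖Lo h‖ ≤ ‖Lo‖ * ‖h‖ := le_opNorm _ _
      _ ≤ 1 * ‖h‖ := mul_le_mul_of_nonneg_right hLo (norm_nonneg _)
      _ = ‖h‖ := one_mul _
  have key : ∀ m : ℕ, m ≤ n → ∀ v : E × F × F,
      ((A ^ m) v).2.1 = (Lo ^ m) v.2.1 ∧ ((A ^ m) v).2.2 = (Lo ^ m) v.2.2 ∧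
      ‖((A ^ m) v).1 - (S ^ m) v.1‖ ≤ (m:ℝ) * (τ * K ^ 3) * (‖v.2.1‖ + ‖v.2.2‖) := by
    intro m
    induction m with
    | zero => intro _ v; refine ⟨by simp, by simp, by simp⟩
    | succ m ih =>
      intro hmn v
      have hm : m ≤ n := Nat.le_of_succ_le hmn
      obtain ⟨ih1, ih2, ih3⟩ := ih hm (A v)
      have hpow1 : (A ^ (m+1)) v = (A ^ m) (A v) := by rw [pow_succ]; rfl
      have hLpow : ∀ h : F, (Lo ^ m) (Lo h) = (Lo ^ (m+1)) h := by
        intro h; rw [pow_succ]; rfl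
      refine ⟨?_, ?_, ?_⟩
      · rw [hpow1, ih1, show (A v).2.1 = Lo v.2.1 from rfl, hLpow]
      · rw [hpow1, ih2, show (A v).2.2 = Lo v.2.2 from rfl, hLpow]
      · have hw1 : (A v).1 = S v.1 + (T₂ (Q₁ v.2.1) + Q₂ v.2.2) := by
          rw [hA v]
          simp only [hSdef, ContinuousLinearMap.mul_apply, map_add]
          abel
        have heq : ((A ^ (m+1)) v).1 - (S ^ (m+1)) v.1
            = (((A ^ m) (A v)).1 - (S ^ m) ((A v).1))
              + ((S ^ m) (T₂ (Q₁ v.2.1)) + (S ^ m) (Q₂ v.2.2)) := by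
          rw [hpow1, hw1, map_add, map_add, pow_succ, ContinuousLinearMap.mul_apply]
          abel
        have hb1 : ‖(S ^ m) (T₂ (Q₁ v.2.1))‖ ≤ τ * K ^ 3 * ‖v.2.1‖ := by
          calc ‖(S ^ m) (T₂ (Q₁ v.2.1))‖ ≤ ‖S ^ m‖ * ‖T₂ (Q₁ v.2.1)‖ := le_opNorm _ _
            _ ≤ ‖S ^ m‖ * (‖T₂‖ * ‖Q₁ v.2.1‖) :=
                mul_le_mul_of_nonneg_left (le_opNorm _ _) (norm_nonneg _)
            _ ≤ ‖S ^ m‖ * (‖T₂‖ * (‖Q₁‖ * ‖v.2.1‖)) := by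
                gcongr
                exact le_opNorm _ _
            _ ≤ K * (K * ((τ * K) * ‖v.2.1‖)) := by
                gcongr <;> exact hS m hm
            _ = τ * K ^ 3 * ‖v.2.1‖ := by ring
        have hb2 : ‖(S ^ m) (Q₂ v.2.2)‖ ≤ τ * K ^ 3 * ‖v.2.2‖ := by
          calc ‖(S ^ m) (Q₂ v.2.2)‖ ≤ ‖S ^ m‖ * ‖Q₂ v.2.2‖ := le_opNorm _ _
            _ ≤ ‖S ^ m‖ * (‖Q₂‖ * ‖v.2.2‖) :=
                mul_le_mul_of_nonneg_left (le_opNorm _ _) (norm_nonneg _)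
            _ ≤ K * ((τ * K) * ‖v.2.2‖) := by
                gcongr <;> exact hS m hm
            _ = τ * K ^ 2 * ‖v.2.2‖ := by ring
            _ ≤ τ * K ^ 3 * ‖v.2.2‖ := by
                nlinarith [mul_nonneg (mul_nonneg hτ (mul_nonneg hK0.le hK0.le))
                  (norm_nonneg v.2.2)]
        have hih : ‖((A ^ m) (A v)).1 - (S ^ m) ((A v).1)‖
            ≤ (m:ℝ) * (τ * K ^ 3) * (‖v.2.1‖ + ‖v.2.2‖) := by
          refine ih3.trans ?_
          have h1 : ‖(A v).2.1‖ ≤ ‖v.2.1‖ := hLapp v.2.1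
          have h2 : ‖(A v).2.2‖ ≤ ‖v.2.2‖ := hLapp v.2.2
          have hτK : 0 ≤ (m:ℝ) * (τ * K ^ 3) := by positivity
          nlinarith [norm_nonneg ((A v).2.1), norm_nonneg ((A v).2.2)]
        calc ‖((A ^ (m+1)) v).1 - (S ^ (m+1)) v.1‖
            ≤ ‖((A ^ m) (A v)).1 - (S ^ m) ((A v).1)‖
              + (‖(S ^ m) (T₂ (Q₁ v.2.1))‖ + ‖(S ^ m) (Q₂ v.2.2)‖) := by
              rw [heq]
              exact (norm_add_le _ _).trans (add_le_add_right (norm_add_le _ _) _)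
          _ ≤ (m:ℝ) * (τ * K ^ 3) * (‖v.2.1‖ + ‖v.2.2‖)
              + (τ * K ^ 3 * ‖v.2.1‖ + τ * K ^ 3 * ‖v.2.2‖) :=
              add_le_add hih (add_le_add hb1 hb2)
          _ = ((m:ℝ) + 1) * (τ * K ^ 3) * (‖v.2.1‖ + ‖v.2.2‖) := by ring
          _ = ((m+1 : ℕ):ℝ) * (τ * K ^ 3) * (‖v.2.1‖ + ‖v.2.2‖) := by push_cast; ring
  have hLpown : ∀ (m : ℕ) (h : F), ‖(Lo ^ m) h‖ ≤ ‖h‖ := by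
    intro m
    induction m with
    | zero => intro h; simp
    | succ m ih =>
      intro h
      have hs : (Lo ^ (m+1)) h = (Lo ^ m) (Lo h) := by rw [pow_succ]; rfl
      rw [hs]
      exact (ih (Lo h)).trans (hLapp h)
  have hDpos : (0:ℝ) ≤ (n:ℝ) * (τ * K ^ 3) := by positivity
  refine opNorm_le_bound _ (by positivity) fun v => ?_
  obtain ⟨k1, k2, k3⟩ := key n le_rfl v
  have hv1 : ‖v.1‖ ≤ ‖v‖ := norm_fst_le v
  have hv2 : ‖v.2.1‖ ≤ ‖v‖ := (norm_fst_le v.2).trans (norm_snd_le v)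
  have hv3 : ‖v.2.2‖ ≤ ‖v‖ := (norm_snd_le v.2).trans (norm_snd_le v)
  have hnormv : (0:ℝ) ≤ ‖v‖ := norm_nonneg v
  have hcomp1 : ‖((A ^ n) v).1‖ ≤ (K + 2 * ((n:ℝ) * (τ * K ^ 3))) * ‖v‖ := by
    have h1 : ‖((A ^ n) v).1‖ ≤ ‖(S ^ n) v.1‖ + ‖((A ^ n) v).1 - (S ^ n) v.1‖ := by
      have := norm_add_le ((S ^ n) v.1) (((A ^ n) v).1 - (S ^ n) v.1)
      simpa using this
    have h2 : ‖(S ^ n) v.1‖ ≤ K * ‖v‖ :=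
      (le_opNorm _ _).trans (mul_le_mul (hS n le_rfl) hv1 (norm_nonneg _) hK0.le)
    have h3 : ‖((A ^ n) v).1 - (S ^ n) v.1‖ ≤ (n:ℝ) * (τ * K ^ 3) * (2 * ‖v‖) := by
      refine k3.trans ?_
      have h4 : ‖v.2.1‖ + ‖v.2.2‖ ≤ 2 * ‖v‖ := by linarith
      exact mul_le_mul_of_nonneg_left h4 hDpos
    nlinarith
  have hcomp2 : ‖((A ^ n) v).2.1‖ ≤ (K + 2 * ((n:ℝ) * (τ * K ^ 3))) * ‖v‖ := by
    rw [k1]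
    calc ‖(Lo ^ n) v.2.1‖ ≤ ‖v‖ := (hLpown n v.2.1).trans hv2
      _ = 1 * ‖v‖ := (one_mul _).symm
      _ ≤ (K + 2 * ((n:ℝ) * (τ * K ^ 3))) * ‖v‖ :=
          mul_le_mul_of_nonneg_right (by linarith) hnormv
  have hcomp3 : ‖((A ^ n) v).2.2‖ ≤ (K + 2 * ((n:ℝ) * (τ * K ^ 3))) * ‖v‖ := by
    rw [k2]
    calc ‖(Lo ^ n) v.2.2‖ ≤ ‖v‖ := (hLpown n v.2.2).trans hv3
      _ = 1 * ‖v‖ := (one_mul _).symm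
      _ ≤ (K + 2 * ((n:ℝ) * (τ * K ^ 3))) * ‖v‖ :=
          mul_le_mul_of_nonneg_right (by linarith) hnormv
  calc ‖(A ^ n) v‖ = max ‖((A ^ n) v).1‖ (max ‖((A ^ n) v).2.1‖ ‖((A ^ n) v).2.2‖) := by
        rw [Prod.norm_def, Prod.norm_def]
    _ ≤ (K + 2 * ((n:ℝ) * (τ * K ^ 3))) * ‖v‖ := max_le hcomp1 (max_le hcomp2 hcomp3)

set_option maxHeartbeats 800000 in
/-- stability of the Trotter products for the splitting of the
inhomogeneous Cauchy problem on `E × C₀([0,∞);E) × C₀([0,∞);E)`. -/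
theorem stability_trotter_inhomogeneous_C0 {E : Type*}
    [NormedAddCommGroup E] [NormedSpace ℝ E] [CompleteSpace E]
    (T₁ T₂ : ℝ → E →L[ℝ] E)
    (hT₁0 : T₁ 0 = 1) (hT₂0 : T₂ 0 = 1)
    (hT₁add : ∀ s t : ℝ, 0 ≤ s → 0 ≤ t → T₁ (t + s) = T₁ t * T₁ s)
    (hT₂add : ∀ s t : ℝ, 0 ≤ s → 0 ≤ t → T₂ (t + s) = T₂ t * T₂ s)
    (hT₁cont : ∀ x : E, ContinuousOn (fun t => T₁ t x) (Set.Ici (0 : ℝ)))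
    (hT₂cont : ∀ x : E, ContinuousOn (fun t => T₂ t x) (Set.Ici (0 : ℝ)))
    (M' ω' : ℝ) (hM' : 1 ≤ M') (hω' : 0 ≤ ω')
    (hb₁ : ∀ t : ℝ, 0 ≤ t → ‖T₁ t‖ ≤ M' * Real.exp (ω' * t))
    (hb₂ : ∀ t : ℝ, 0 ≤ t → ‖T₂ t‖ ≤ M' * Real.exp (ω' * t))
    (hstab : ∀ t : ℝ, 0 ≤ t → ∀ n : ℕ, 1 ≤ n →
      ‖(T₂ (t / n) * T₁ (t / n)) ^ n‖ ≤ M' * Real.exp (ω' * t))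
    (L : ℝ → C₀(Set.Ici (0 : ℝ), E) →L[ℝ] C₀(Set.Ici (0 : ℝ), E))
    (hL : ∀ t : ℝ, 0 ≤ t → ∀ f : C₀(Set.Ici (0 : ℝ), E),
      ∀ (s : ℝ) (hs : 0 ≤ s) (hst : 0 ≤ s + t), (L t f) ⟨s, hs⟩ = f ⟨s + t, hst⟩)
    (Q₁ Q₂ : ℝ → C₀(Set.Ici (0 : ℝ), E) →L[ℝ] E)
    (hQ₁ : ∀ t : ℝ, 0 ≤ t → ∀ f : C₀(Set.Ici (0 : ℝ), E),
      Q₁ t f = ∫ s in (0 : ℝ)..t, T₁ (t - s) (extIci f s))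
    (hQ₂ : ∀ t : ℝ, 0 ≤ t → ∀ f : C₀(Set.Ici (0 : ℝ), E),
      Q₂ t f = ∫ s in (0 : ℝ)..t, T₂ (t - s) (extIci f s)) :
    ∃ M ω : ℝ, 1 ≤ M ∧ ∀ t : ℝ, 0 ≤ t → ∀ n : ℕ, 1 ≤ n →
      ‖(tripleMatSecond (T₂ (t / n)) (Q₂ (t / n)) (L (t / n)) *
          tripleMatFirst (T₁ (t / n)) (Q₁ (t / n)) (L (t / n))) ^ n‖ ≤
        M * Real.exp (ω * t) := by
  classical
  -- pointwise norm facts for C₀ functions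
  have hfval : ∀ (f : C₀(Set.Ici (0:ℝ), E)) (x : Set.Ici (0:ℝ)), ‖f x‖ ≤ ‖f‖ := by
    intro f x
    rw [← ZeroAtInftyContinuousMap.norm_toBCF_eq_norm]
    exact f.toBCF.norm_coe_le_norm x
  have hext : ∀ (f : C₀(Set.Ici (0:ℝ), E)) (s : ℝ), ‖extIci f s‖ ≤ ‖f‖ := by
    intro f s
    unfold extIci
    split_ifs with h
    · exact hfval f _
    · simpa using norm_nonneg f
  -- the shift has norm at most 1
  have hLnorm : ∀ t : ℝ, 0 ≤ t → ‖L t‖ ≤ 1 := by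
    intro t ht
    refine opNorm_le_bound _ zero_le_one fun f => ?_
    rw [one_mul, ← ZeroAtInftyContinuousMap.norm_toBCF_eq_norm]
    refine (BoundedContinuousFunction.norm_le (norm_nonneg f)).2 fun x => ?_
    obtain ⟨s, hs⟩ := x
    have hst : 0 ≤ s + t := add_nonneg hs ht
    have hval : (L t f).toBCF ⟨s, hs⟩ = f ⟨s + t, hst⟩ := hL t ht f s hs hst
    rw [hval]
    exact hfval f _
  -- bound on the convolution operators
  have hQbound : ∀ (T : ℝ → E →L[ℝ] E), (∀ u : ℝ, 0 ≤ u → ‖T u‖ ≤ M' * Real.exp (ω' * u)) →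
      ∀ (Q : ℝ → C₀(Set.Ici (0:ℝ), E) →L[ℝ] E),
      (∀ u : ℝ, 0 ≤ u → ∀ f, Q u f = ∫ s in (0:ℝ)..u, T (u - s) (extIci f s)) →
      ∀ u : ℝ, 0 ≤ u → ‖Q u‖ ≤ u * (M' * Real.exp (ω' * u)) := by
    intro T hT Q hQ u hu
    have hMpos : (0:ℝ) < M' := lt_of_lt_of_le one_pos hM'
    refine opNorm_le_bound _ (by positivity) fun f => ?_
    rw [hQ u hu f]
    have hbd : ‖∫ s in (0:ℝ)..u, T (u - s) (extIci f s)‖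
        ≤ (M' * Real.exp (ω' * u) * ‖f‖) * |u - 0| := by
      refine intervalIntegral.norm_integral_le_of_norm_le_const fun s hs => ?_
      rw [Set.uIoc_of_le hu] at hs
      have h1 : 0 ≤ u - s := by linarith [hs.2]
      have h2 : ‖T (u - s) (extIci f s)‖ ≤ ‖T (u - s)‖ * ‖extIci f s‖ := le_opNorm _ _
      have h3 : ‖T (u - s)‖ ≤ M' * Real.exp (ω' * (u - s)) := hT _ h1
      have h4 : Real.exp (ω' * (u - s)) ≤ Real.exp (ω' * u) :=
        Real.exp_le_exp.2 (by nlinarith [hs.1])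
      have h5 : ‖extIci f s‖ ≤ ‖f‖ := hext f s
      calc ‖T (u - s) (extIci f s)‖ ≤ ‖T (u - s)‖ * ‖extIci f s‖ := h2
        _ ≤ (M' * Real.exp (ω' * u)) * ‖f‖ := by
            apply mul_le_mul (h3.trans (by nlinarith [Real.exp_pos (ω' * (u - s))])) h5
              (norm_nonneg _) (by positivity)
    rw [abs_of_nonneg (by linarith : (0:ℝ) ≤ u - 0)] at hbd
    calc ‖∫ s in (0:ℝ)..u, T (u - s) (extIci f s)‖
        ≤ (M' * Real.exp (ω' * u) * ‖f‖) * (u - 0) := hbd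
      _ = u * (M' * Real.exp (ω' * u)) * ‖f‖ := by ring
  have hQ₁bound := hQbound T₁ hb₁ Q₁ hQ₁
  have hQ₂bound := hQbound T₂ hb₂ Q₂ hQ₂
  -- stability for all powers
  have hpow : ∀ τ : ℝ, 0 ≤ τ → ∀ m : ℕ, ‖(T₂ τ * T₁ τ) ^ m‖ ≤ M' * Real.exp (ω' * (m * τ)) := by
    intro τ hτ m
    rcases Nat.eq_zero_or_pos m with hm | hm
    · subst hm
      simp only [pow_zero, Nat.cast_zero, zero_mul, mul_zero, Real.exp_zero, mul_one]
      calc ‖(1 : E →L[ℝ] E)‖ = ‖ContinuousLinearMap.id ℝ E‖ := rfl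
        _ ≤ 1 := norm_id_le
        _ ≤ M' := hM'
    · have hmn : (m:ℝ) ≠ 0 := Nat.cast_ne_zero.2 hm.ne'
      have := hstab ((m:ℝ) * τ) (by positivity) m hm
      rwa [mul_div_cancel_left₀ τ hmn] at this
  -- main estimate
  refine ⟨3 * M' ^ 3, 3 * ω' + 1, by nlinarith [pow_le_pow_left₀ zero_le_one hM' 3], ?_⟩
  intro t ht n hn
  have hn0 : (n:ℝ) ≠ 0 := Nat.cast_ne_zero.2 (by omega)
  have hn1 : (1:ℝ) ≤ (n:ℝ) := by exact_mod_cast hn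
  set τ := t / n with hτdef
  have hτ : 0 ≤ τ := div_nonneg ht (by positivity)
  have hnτ : (n:ℝ) * τ = t := by rw [hτdef]; field_simp
  have hτt : τ ≤ t := by nlinarith
  set K := M' * Real.exp (ω' * t) with hKdef
  have hK1 : 1 ≤ K := by
    have := Real.one_le_exp (by positivity : (0:ℝ) ≤ ω' * t)
    nlinarith
  have hK0 : 0 < K := lt_of_lt_of_le one_pos hK1
  have hexpτ : Real.exp (ω' * τ) ≤ Real.exp (ω' * t) := Real.exp_le_exp.2 (by nlinarith)
  have hMK : M' * Real.exp (ω' * τ) ≤ K := by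
    have := mul_le_mul_of_nonneg_left hexpτ (by linarith : (0:ℝ) ≤ M')
    linarith
  have hSK : ∀ m : ℕ, m ≤ n → ‖(T₂ τ * T₁ τ) ^ m‖ ≤ K := by
    intro m hm
    refine (hpow τ hτ m).trans ?_
    have h1 : (m:ℝ) * τ ≤ t := by
      rw [← hnτ]
      exact mul_le_mul_of_nonneg_right (by exact_mod_cast hm) hτ
    have h2 := Real.exp_le_exp.2 (mul_le_mul_of_nonneg_left h1 hω')
    have h3 := mul_le_mul_of_nonneg_left h2 (by linarith : (0:ℝ) ≤ M')
    linarith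
  have main := trotter_triple_aux (T₁ τ) (T₂ τ) (Q₁ τ) (Q₂ τ) (L τ) K τ n hK1 hτ
    (hLnorm τ hτ) ((hb₂ τ hτ).trans hMK)
    ((hQ₁bound τ hτ).trans (mul_le_mul_of_nonneg_left hMK hτ))
    ((hQ₂bound τ hτ).trans (mul_le_mul_of_nonneg_left hMK hτ)) hSK
  refine main.trans ?_
  -- numeric conclusion : K + 2 * (n * (τ * K^3)) ≤ 3 M'^3 exp((3ω'+1) t)
  have hnτK : (n:ℝ) * (τ * K ^ 3) = t * K ^ 3 := by rw [← hnτ]; ring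
  rw [hnτK]
  have hexp3 : Real.exp ((3 * ω' + 1) * t) = Real.exp (ω' * t) ^ 3 * Real.exp t := by
    rw [show (3 * ω' + 1) * t = ω' * t + (ω' * t + (ω' * t + t)) by ring,
      Real.exp_add, Real.exp_add, Real.exp_add]
    ring
  have ht_exp : t ≤ Real.exp t := by linarith [Real.add_one_le_exp t]
  have hexp0 : (0:ℝ) < Real.exp (ω' * t) := Real.exp_pos _
  have hexp1 : (1:ℝ) ≤ Real.exp (ω' * t) := Real.one_le_exp (by positivity)
  have het1 : (1:ℝ) ≤ Real.exp t := Real.one_le_exp ht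
  have hKM : K ≤ M' ^ 3 * Real.exp ((3 * ω' + 1) * t) := by
    rw [hexp3, hKdef]
    have hM0 : (0:ℝ) ≤ M' := by linarith
    have hsq : (1:ℝ) ≤ M' * M' := by nlinarith
    have h1 : M' ≤ M' ^ 3 := by nlinarith
    have hesq : (1:ℝ) ≤ Real.exp (ω' * t) * Real.exp (ω' * t) := by nlinarith
    have h2 : Real.exp (ω' * t) ≤ Real.exp (ω' * t) ^ 3 := by nlinarith
    calc M' * Real.exp (ω' * t)
        ≤ M' ^ 3 * Real.exp (ω' * t) ^ 3 := mul_le_mul h1 h2 hexp0.le (by positivity)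
      _ = M' ^ 3 * Real.exp (ω' * t) ^ 3 * 1 := by ring
      _ ≤ M' ^ 3 * Real.exp (ω' * t) ^ 3 * Real.exp t :=
          mul_le_mul_of_nonneg_left het1 (by positivity)
      _ = M' ^ 3 * (Real.exp (ω' * t) ^ 3 * Real.exp t) := by ring
  have htK3 : t * K ^ 3 ≤ M' ^ 3 * Real.exp ((3 * ω' + 1) * t) := by
    rw [hexp3, hKdef]
    have h1 : t * (M' * Real.exp (ω' * t)) ^ 3
        = M' ^ 3 * Real.exp (ω' * t) ^ 3 * t := by ring
    rw [h1]
    have := mul_le_mul_of_nonneg_left ht_exp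
      (by positivity : (0:ℝ) ≤ M' ^ 3 * Real.exp (ω' * t) ^ 3)
    linarith
  nlinarith
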